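/- arXiv:1306.2914 — 2 statements merged into one kernel-verified Lean document; each statement's English description precedes it below -/
import Mathlib

section
/- For every ω ∈ ℂ, the function c(ω,x) := cos(ωx) + ∫₀ˣ (K(x,t) + K(x,−t))·cos(ωt) dt is twice continuously differentiable in x on [-b,b] and satisfies c'' − q·c + ω²·c = 0 on [-b,b], together with the initial conditions c(ω,0) = 1 and ∂c/∂x(ω,0) = h. -/
/-!
Put `G x t = K x t + K x (-t)`, so that `c x = cos (ω x) + ∫₀ˣ G x t cos (ω t) dt`. From `K`, the
kernel `G` inherits the wave equation `G_xx - q G = G_tt` and the diagonal condition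
`d/dx G(x,x) = q x / 2`; being even in `t`, it also satisfies `G_t(x,0) = 0`. Differentiate `c`
twice under the integral sign (Leibniz rule with variable upper limit), replace `G_xx` by
`q G + G_tt` and integrate `G_tt cos (ω t)` by parts twice. The boundary terms at `t = x` combine
with the diagonal terms into `2 (G_x + G_t)(x,x) cos (ω x) = q x cos (ω x)`, and those at `t = 0`
vanish, which leaves `c'' = (q - ω²) c`.
-/

open Set MeasureTheory Filter

/-- Second partial derivative with respect to the first variable, within `[-b,b]`. -/
noncomputable def d2x (b : ℝ) (K : ℝ → ℝ → ℂ) (x t : ℝ) : ℂ :=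
  derivWithin (fun x' => derivWithin (fun x'' => K x'' t) (Set.Icc (-b) b) x') (Set.Icc (-b) b) x

/-- Second partial derivative with respect to the second variable, within `[-b,b]`. -/
noncomputable def d2t (b : ℝ) (K : ℝ → ℝ → ℂ) (x t : ℝ) : ℂ :=
  derivWithin (fun t' => derivWithin (fun t'' => K x t'') (Set.Icc (-b) b) t') (Set.Icc (-b) b) t

/-- `K` is a transmutation kernel for `(q, h)` on `[-b,b]`: it is twice continuously
differentiable, satisfies `∂²K/∂x² − q(x)K = ∂²K/∂t²` on `[-b,b]²`, and the Goursat data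
`K(x,x) = h/2 + (1/2)∫₀ˣ q` and `K(x,−x) = h/2`. -/
def IsTransmutationKernel (b : ℝ) (q : ℝ → ℂ) (h : ℂ) (K : ℝ → ℝ → ℂ) : Prop :=
  ContDiffOn ℝ 2 (fun p : ℝ × ℝ => K p.1 p.2) (Set.Icc (-b) b ×ˢ Set.Icc (-b) b) ∧
  (∀ x ∈ Set.Icc (-b) b, ∀ t ∈ Set.Icc (-b) b, d2x b K x t - q x * K x t = d2t b K x t) ∧
  (∀ x ∈ Set.Icc (-b) b, K x x = h / 2 + (1 / 2) * ∫ s in (0:ℝ)..x, q s) ∧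
  (∀ x ∈ Set.Icc (-b) b, K x (-x) = h / 2)

open Function
open scoped Interval

section PartialDerivatives

variable {E : Type*} [NormedAddCommGroup E] [NormedSpace ℝ E]
  {F : ℝ → ℝ → E} {s u : Set ℝ} {x t : ℝ}

noncomputable def partialFst (s : Set ℝ) (F : ℝ → ℝ → E) (x t : ℝ) : E :=
  derivWithin (fun x' => F x' t) s x

noncomputable def partialSnd (s : Set ℝ) (F : ℝ → ℝ → E) (x t : ℝ) : E :=
  derivWithin (F x) s t

namespace DifferentiableOn

variable (hF : DifferentiableOn ℝ (uncurry F) (s ×ˢ u)) (hx : x ∈ s) (ht : t ∈ u)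
include hF hx ht

theorem hasDerivWithinAt_fderivWithin_fst :
    HasDerivWithinAt (F · t) (fderivWithin ℝ (uncurry F) (s ×ˢ u) (x, t) (1, 0)) s x :=
  (hF _ ⟨hx, ht⟩).hasFDerivWithinAt.comp_hasDerivWithinAt x
    ((hasDerivWithinAt_id x s).prodMk (hasDerivWithinAt_const x s t)) fun _ hy => ⟨hy, ht⟩

theorem hasDerivWithinAt_fderivWithin_snd :
    HasDerivWithinAt (F x) (fderivWithin ℝ (uncurry F) (s ×ˢ u) (x, t) (0, 1)) u t :=
  (hF _ ⟨hx, ht⟩).hasFDerivWithinAt.comp_hasDerivWithinAt t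
    ((hasDerivWithinAt_const t u x).prodMk (hasDerivWithinAt_id t u)) fun _ hy => ⟨hx, hy⟩

theorem hasDerivWithinAt_partialFst : HasDerivWithinAt (F · t) (partialFst s F x t) s x :=
  (hF.hasDerivWithinAt_fderivWithin_fst hx ht).differentiableWithinAt.hasDerivWithinAt

theorem hasDerivWithinAt_partialSnd : HasDerivWithinAt (F x) (partialSnd u F x t) u t :=
  (hF.hasDerivWithinAt_fderivWithin_snd hx ht).differentiableWithinAt.hasDerivWithinAt

theorem partialFst_eq_fderivWithin (hs : UniqueDiffOn ℝ s) :
    partialFst s F x t = fderivWithin ℝ (uncurry F) (s ×ˢ u) (x, t) (1, 0) :=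
  (hF.hasDerivWithinAt_fderivWithin_fst hx ht).derivWithin (hs x hx)

theorem partialSnd_eq_fderivWithin (hu : UniqueDiffOn ℝ u) :
    partialSnd u F x t = fderivWithin ℝ (uncurry F) (s ×ˢ u) (x, t) (0, 1) :=
  (hF.hasDerivWithinAt_fderivWithin_snd hx ht).derivWithin (hu t ht)

end DifferentiableOn

namespace ContDiffOn

variable {n : WithTop ℕ∞} (hF : ContDiffOn ℝ (n + 1) (uncurry F) (s ×ˢ u))
  (hs : UniqueDiffOn ℝ s) (hu : UniqueDiffOn ℝ u)
include hF hs hu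

theorem partialFst : ContDiffOn ℝ n (uncurry (partialFst s F)) (s ×ˢ u) :=
  ((hF.fderivWithin (hs.prod hu) le_rfl).clm_apply contDiffOn_const).congr fun p hp =>
    (hF.differentiableOn (by simp)).partialFst_eq_fderivWithin hp.1 hp.2 hs

theorem partialSnd : ContDiffOn ℝ n (uncurry (partialSnd u F)) (s ×ˢ u) :=
  ((hF.fderivWithin (hs.prod hu) le_rfl).clm_apply contDiffOn_const).congr fun p hp =>
    (hF.differentiableOn (by simp)).partialSnd_eq_fderivWithin hp.1 hp.2 hu

end ContDiffOn

theorem DifferentiableOn.hasDerivWithinAt_comp_graph (hF : DifferentiableOn ℝ (uncurry F) (s ×ˢ u))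
    (hs : UniqueDiffOn ℝ s) (hu : UniqueDiffOn ℝ u) {g : ℝ → ℝ} {g' : ℝ}
    (hg : HasDerivWithinAt g g' s x) (hgu : MapsTo g s u) (hx : x ∈ s) :
    HasDerivWithinAt (fun y => F y (g y)) (partialFst s F x (g x) + g' • partialSnd u F x (g x))
      s x := by
  have hγ := (hasDerivWithinAt_id x s).prodMk hg
  refine ((hF _ ⟨hx, hgu hx⟩).hasFDerivWithinAt.comp_hasDerivWithinAt x hγ
    fun y hy => ⟨hy, hgu hy⟩).congr_deriv ?_
  rw [hF.partialFst_eq_fderivWithin hx (hgu hx) hs, hF.partialSnd_eq_fderivWithin hx (hgu hx) hu,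
    ← map_smul, ← map_add]
  simp

end PartialDerivatives

section Leibniz

variable {E : Type*} [NormedAddCommGroup E] [NormedSpace ℝ E]

theorem Convex.norm_image_sub_sub_smul_le {f f' : ℝ → E} {s : Set ℝ} {v : E} {C x y : ℝ}
    (hs : Convex ℝ s) (hf : ∀ z ∈ s, HasDerivWithinAt f (f' z) s z)
    (bound : ∀ z ∈ s, ‖f' z - v‖ ≤ C) (hx : x ∈ s) (hy : y ∈ s) :
    ‖f y - f x - (y - x) • v‖ ≤ C * ‖y - x‖ := by
  have hg : ∀ z ∈ s, HasDerivWithinAt (fun z => f z - z • v) (f' z - v) s z := fun z hz => by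
    have := (hf z hz).sub ((hasDerivWithinAt_id z s).smul_const v)
    rwa [one_smul] at this
  convert hs.norm_image_sub_le_of_norm_hasDerivWithin_le hg bound hx hy using 2
  rw [sub_smul]
  abel

variable {f D : ℝ → ℝ → E} {s : Set ℝ} {a b x : ℝ}

theorem hasDerivWithinAt_intervalIntegral_param (hs : Convex ℝ s)
    (hf : ∀ y ∈ s, IntervalIntegrable (f y) volume a b)
    (hD : ∀ y ∈ s, ∀ t ∈ [[a, b]], HasDerivWithinAt (f · t) (D y t) s y)
    (hDc : ContinuousOn (uncurry D) (s ×ˢ [[a, b]])) (hx : x ∈ s) :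
    HasDerivWithinAt (fun y => ∫ t in a..b, f y t) (∫ t in a..b, D x t) s x := by
  rw [hasDerivWithinAt_iff_isLittleO, Asymptotics.isLittleO_iff]
  intro ε hε
  set ε' := ε / (|b - a| + 1)
  -- by compactness of `[[a, b]]`, `D y t → D x t` uniformly in `t` as `y → x` within `s`
  obtain ⟨v, hv, hvD⟩ := isCompact_uIcc.mem_uniformity_of_prod hDc hx
    (Metric.dist_mem_uniformity (by positivity : 0 < ε'))
  obtain ⟨δ, hδ, hδv⟩ := Metric.mem_nhdsWithin_iff.1 hv
  filter_upwards [inter_mem_nhdsWithin s (Metric.ball_mem_nhds x hδ)] with y ⟨hys, hyδ⟩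
  have hDx : IntervalIntegrable (D x) volume a b :=
    (hDc.uncurry_left x hx).intervalIntegrable
  have pointwise : ∀ t ∈ [[a, b]], ‖f y t - f x t - (y - x) • D x t‖ ≤ ε' * |y - x| := by
    intro t ht
    have hJ : Convex ℝ (Metric.ball x δ ∩ s) := (convex_ball x δ).inter hs
    have hbound : ∀ z ∈ Metric.ball x δ ∩ s, ‖D z t - D x t‖ ≤ ε' := fun z hz => by
      have hz : dist (D z t) (D x t) < ε' := hvD z (hδv hz) t ht
      rw [dist_eq_norm] at hz
      exact hz.le
    simpa [Real.norm_eq_abs] using hJ.norm_image_sub_sub_smul_le (f := (f · t))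
      (fun z hz => (hD z hz.2 t ht).mono inter_subset_right) hbound
      ⟨Metric.mem_ball_self hδ, hx⟩ ⟨hyδ, hys⟩
  calc ‖(∫ t in a..b, f y t) - (∫ t in a..b, f x t) - (y - x) • ∫ t in a..b, D x t‖
      = ‖∫ t in a..b, (f y t - f x t - (y - x) • D x t)‖ := by
        rw [intervalIntegral.integral_sub (f := fun t => f y t - f x t)
          (g := fun t => (y - x) • D x t) ((hf y hys).sub (hf x hx)) (hDx.smul (y - x)),
          intervalIntegral.integral_sub (hf y hys) (hf x hx), intervalIntegral.integral_smul]
    _ ≤ ε' * |y - x| * |b - a| := intervalIntegral.norm_integral_le_of_norm_le_const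
        fun t ht => pointwise t (uIoc_subset_uIcc ht)
    _ ≤ ε' * |y - x| * (|b - a| + 1) := by gcongr; linarith
    _ = ε * ‖y - x‖ := by
        rw [Real.norm_eq_abs, mul_right_comm, div_mul_cancel₀ ε (by positivity), mul_comm]

variable [CompleteSpace E]

theorem hasDerivWithinAt_intervalIntegral_param_upper (hs : s.OrdConnected)
    (hf : ContinuousOn (uncurry f) (s ×ˢ s)) (hx : x ∈ s) :
    HasDerivWithinAt (fun y => ∫ t in x..y, f y t) (f x x) s x := by
  rw [hasDerivWithinAt_iff_isLittleO, Asymptotics.isLittleO_iff]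
  intro ε hε
  obtain ⟨δ, hδ, hfδ⟩ := Metric.continuousWithinAt_iff.1 (hf (x, x) ⟨hx, hx⟩) ε hε
  filter_upwards [inter_mem_nhdsWithin s (Metric.ball_mem_nhds x hδ)] with y ⟨hys, hyδ⟩
  have hxy : [[x, y]] ⊆ s := hs.uIcc_subset hx hys
  have hfy : IntervalIntegrable (f y) volume x y :=
    ((hf.uncurry_left y hys).mono hxy).intervalIntegrable
  calc ‖(∫ t in x..y, f y t) - (∫ t in x..x, f x t) - (y - x) • f x x‖
      = ‖∫ t in x..y, (f y t - f x x)‖ := by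
        rw [intervalIntegral.integral_same, sub_zero, intervalIntegral.integral_sub hfy
          intervalIntegrable_const, intervalIntegral.integral_const]
    _ ≤ ε * |y - x| := by
        refine intervalIntegral.norm_integral_le_of_norm_le_const fun t ht => ?_
        have ht' := uIoc_subset_uIcc ht
        rw [← dist_eq_norm]
        refine (hfδ (show (y, t) ∈ s ×ˢ s from ⟨hys, hxy ht'⟩) ?_).le
        rw [Prod.dist_eq, max_lt_iff]
        refine ⟨hyδ, lt_of_le_of_lt ?_ hyδ⟩
        rw [Real.dist_eq, Real.dist_eq]
        exact abs_sub_left_of_mem_uIcc ht'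
    _ = ε * ‖y - x‖ := by rw [Real.norm_eq_abs]

theorem hasDerivWithinAt_intervalIntegral_leibniz (hs : Convex ℝ s)
    (hf : ContinuousOn (uncurry f) (s ×ˢ s))
    (hD : ∀ y ∈ s, ∀ t ∈ s, HasDerivWithinAt (f · t) (D y t) s y)
    (hDc : ContinuousOn (uncurry D) (s ×ˢ s)) (ha : a ∈ s) (hx : x ∈ s) :
    HasDerivWithinAt (fun y => ∫ t in a..y, f y t) (f x x + ∫ t in a..x, D x t) s x := by
  have hs' : s.OrdConnected := hs.ordConnected
  have hfy : ∀ y ∈ s, ∀ c ∈ s, ∀ d ∈ s, IntervalIntegrable (f y) volume c d := fun y hy c hc d hd =>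
    ((hf.uncurry_left y hy).mono (hs'.uIcc_subset hc hd)).intervalIntegrable
  have hax := hs'.uIcc_subset ha hx
  have hfixed := hasDerivWithinAt_intervalIntegral_param hs (fun y hy => hfy y hy a ha x hx)
    (fun y hy t ht => hD y hy t (hax ht)) (hDc.mono (prod_mono subset_rfl hax)) hx
  refine ((hasDerivWithinAt_intervalIntegral_param_upper hs' hf hx).add hfixed).congr
    (fun y hy => ?_) ?_
  · rw [Pi.add_apply, add_comm,
      intervalIntegral.integral_add_adjacent_intervals (hfy y hy a ha x hx) (hfy y hy x hx y hy)]
  · rw [Pi.add_apply, intervalIntegral.integral_same, zero_add]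

end Leibniz

theorem hasDerivAt_cos_mul_ofReal (ω : ℂ) (t : ℝ) :
    HasDerivAt (fun t : ℝ => Complex.cos (ω * t)) (-(ω * Complex.sin (ω * t))) t := by
  simpa [mul_comm] using (((hasDerivAt_id (t : ℂ)).const_mul ω).ccos).comp_ofReal

theorem hasDerivAt_sin_mul_ofReal (ω : ℂ) (t : ℝ) :
    HasDerivAt (fun t : ℝ => Complex.sin (ω * t)) (ω * Complex.cos (ω * t)) t := by
  simpa [mul_comm] using (((hasDerivAt_id (t : ℂ)).const_mul ω).csin).comp_ofReal

theorem integral_second_deriv_mul_cos {u u' u'' : ℝ → ℂ} {a b : ℝ} (ω : ℂ)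
    (hu : ∀ t ∈ [[a, b]], HasDerivWithinAt u (u' t) [[a, b]] t)
    (hu' : ∀ t ∈ [[a, b]], HasDerivWithinAt u' (u'' t) [[a, b]] t)
    (hu'' : ContinuousOn u'' [[a, b]]) :
    ∫ t in a..b, u'' t * Complex.cos (ω * t) =
      (u' b * Complex.cos (ω * b) + ω * u b * Complex.sin (ω * b)) -
        (u' a * Complex.cos (ω * a) + ω * u a * Complex.sin (ω * a)) -
        ω ^ 2 * ∫ t in a..b, u t * Complex.cos (ω * t) := by
  have hcont : ContinuousOn u [[a, b]] := fun t ht => (hu t ht).continuousWithinAt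
  have hcont' : ContinuousOn u' [[a, b]] := fun t ht => (hu' t ht).continuousWithinAt
  have hcos : Continuous fun t : ℝ => Complex.cos (ω * t) := by fun_prop
  have hsin : Continuous fun t : ℝ => Complex.sin (ω * t) := by fun_prop
  have hW : ∀ t ∈ [[a, b]], HasDerivWithinAt
      (fun t => u' t * Complex.cos (ω * t) + ω * u t * Complex.sin (ω * t))
      (u'' t * Complex.cos (ω * t) + ω ^ 2 * (u t * Complex.cos (ω * t))) [[a, b]] t := by
    intro t ht
    refine (((hu' t ht).mul (hasDerivAt_cos_mul_ofReal ω t).hasDerivWithinAt).add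
      (((hu t ht).const_mul ω).mul (hasDerivAt_sin_mul_ofReal ω t).hasDerivWithinAt)).congr_deriv ?_
    ring
  have hint : IntervalIntegrable (fun t => u t * Complex.cos (ω * t)) volume a b :=
    (hcont.mul hcos.continuousOn).intervalIntegrable
  have hint'' : IntervalIntegrable (fun t => u'' t * Complex.cos (ω * t)) volume a b :=
    (hu''.mul hcos.continuousOn).intervalIntegrable
  have hFTC := intervalIntegral.integral_eq_sub_of_hasDeriv_right
    (f := fun t => u' t * Complex.cos (ω * t) + ω * u t * Complex.sin (ω * t))
    ((hcont'.mul hcos.continuousOn).add ((hcont.const_smul ω).mul hsin.continuousOn))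
    (fun t ht => ((hW t (Ioo_subset_Icc_self ht)).hasDerivAt
      (Icc_mem_nhds ht.1 ht.2)).hasDerivWithinAt) (hint''.add (hint.const_mul (ω ^ 2)))
  rw [intervalIntegral.integral_add hint'' (hint.const_mul _),
    intervalIntegral.integral_const_mul] at hFTC
  rw [eq_sub_iff_add_eq]
  exact hFTC

theorem contDiffOn_two_of_hasDerivWithinAt {E : Type*} [NormedAddCommGroup E] [NormedSpace ℝ E]
    {f f' f'' : ℝ → E} {s : Set ℝ} (hs : UniqueDiffOn ℝ s)
    (hf : ∀ x ∈ s, HasDerivWithinAt f (f' x) s x) (hf' : ∀ x ∈ s, HasDerivWithinAt f' (f'' x) s x)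
    (hf'' : ContinuousOn f'' s) : ContDiffOn ℝ 2 f s := by
  have hf'C1 : ContDiffOn ℝ 1 f' s := (contDiffOn_one_iff_derivWithin hs).2
    ⟨fun x hx => (hf' x hx).differentiableWithinAt,
      hf''.congr fun x hx => (hf' x hx).derivWithin (hs x hx)⟩
  rw [show (2 : WithTop ℕ∞) = 1 + 1 from rfl, contDiffOn_succ_iff_derivWithin hs]
  exact ⟨fun x hx => (hf x hx).differentiableWithinAt, by simp,
    hf'C1.congr fun x hx => (hf x hx).derivWithin (hs x hx)⟩

structure IsCosineKernel (s : Set ℝ) (q : ℝ → ℂ) (G : ℝ → ℝ → ℂ) : Prop where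
  contDiffOn : ContDiffOn ℝ 2 (uncurry G) (s ×ˢ s)
  wave : ∀ x ∈ s, ∀ t ∈ s,
    partialFst s (partialFst s G) x t - q x * G x t = partialSnd s (partialSnd s G) x t
  hasDerivWithinAt_diag : ∀ x ∈ s, HasDerivWithinAt (fun y => G y y) (q x / 2) s x
  partialSnd_zero : ∀ x ∈ s, partialSnd s G x 0 = 0

noncomputable def cosineSolution (G : ℝ → ℝ → ℂ) (ω : ℂ) (x : ℝ) : ℂ :=
  Complex.cos (ω * x) + ∫ t in (0 : ℝ)..x, G x t * Complex.cos (ω * t)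

noncomputable def cosineSolutionDeriv (s : Set ℝ) (G : ℝ → ℝ → ℂ) (ω : ℂ) (x : ℝ) : ℂ :=
  -(ω * Complex.sin (ω * x)) + G x x * Complex.cos (ω * x) +
    ∫ t in (0 : ℝ)..x, partialFst s G x t * Complex.cos (ω * t)

section CosineSolution

variable {s : Set ℝ} {q : ℝ → ℂ} {G : ℝ → ℝ → ℂ} {x : ℝ}
  (hs : Convex ℝ s) (hs' : UniqueDiffOn ℝ s) (h0 : (0 : ℝ) ∈ s) (ω : ℂ)
include hs hs' h0

theorem hasDerivWithinAt_cosineSolution (hG : ContDiffOn ℝ 1 (uncurry G) (s ×ˢ s)) (hx : x ∈ s) :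
    HasDerivWithinAt (cosineSolution G ω) (cosineSolutionDeriv s G ω x) s x := by
  have hcos : Continuous fun p : ℝ × ℝ => Complex.cos (ω * p.2) := by fun_prop
  have hGx : ContDiffOn ℝ 0 (uncurry (partialFst s G)) (s ×ˢ s) :=
    ContDiffOn.partialFst (by rwa [zero_add]) hs' hs'
  have hleibniz := hasDerivWithinAt_intervalIntegral_leibniz hs
    (f := fun y t => G y t * Complex.cos (ω * t))
    (D := fun y t => partialFst s G y t * Complex.cos (ω * t))
    (hG.continuousOn.mul hcos.continuousOn)
    (fun y hy t ht =>
      ((hG.differentiableOn one_ne_zero).hasDerivWithinAt_partialFst hy ht).mul_const _)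
    (hGx.continuousOn.mul hcos.continuousOn) h0 hx
  exact ((hasDerivAt_cos_mul_ofReal ω x).hasDerivWithinAt.add hleibniz).congr_deriv
    (add_assoc ..).symm

end CosineSolution

namespace IsCosineKernel

variable {s : Set ℝ} {q : ℝ → ℂ} {G : ℝ → ℝ → ℂ} {x : ℝ} (hG : IsCosineKernel s q G)
  (hs' : UniqueDiffOn ℝ s)
include hG hs'

theorem partialFst_add_partialSnd_diag (hx : x ∈ s) :
    partialFst s G x x + partialSnd s G x x = q x / 2 := by
  have hchain := (hG.contDiffOn.differentiableOn two_ne_zero).hasDerivWithinAt_comp_graph hs' hs'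
    (hasDerivWithinAt_id x s) (mapsTo_id s) hx
  rw [one_smul] at hchain
  exact (hs' x hx).eq_deriv s hchain (hG.hasDerivWithinAt_diag x hx)

variable (hs : Convex ℝ s) (h0 : (0 : ℝ) ∈ s) (ω : ℂ)
include hs h0

theorem integral_partialFst_partialFst_mul_cos (hx : x ∈ s) :
    ∫ t in (0 : ℝ)..x, partialFst s (partialFst s G) x t * Complex.cos (ω * t) =
      (q x - ω ^ 2) * (∫ t in (0 : ℝ)..x, G x t * Complex.cos (ω * t)) +
        partialSnd s G x x * Complex.cos (ω * x) + ω * G x x * Complex.sin (ω * x) := by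
  have hsub : [[0, x]] ⊆ s := hs.ordConnected.uIcc_subset h0 hx
  have hG1 : DifferentiableOn ℝ (uncurry G) (s ×ˢ s) := hG.contDiffOn.differentiableOn two_ne_zero
  have hGt : ContDiffOn ℝ 1 (uncurry (partialSnd s G)) (s ×ˢ s) :=
    ContDiffOn.partialSnd (n := 1) hG.contDiffOn hs' hs'
  have hGtt : ContinuousOn (partialSnd s (partialSnd s G) x) s :=
    (ContDiffOn.partialSnd (n := 0) (by rwa [zero_add]) hs' hs').continuousOn.uncurry_left x hx
  have hcos : Continuous fun t : ℝ => Complex.cos (ω * t) := by fun_prop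
  have hibp := integral_second_deriv_mul_cos ω
    (fun t ht => (hG1.hasDerivWithinAt_partialSnd hx (hsub ht)).mono hsub)
    (fun t ht => ((hGt.differentiableOn one_ne_zero).hasDerivWithinAt_partialSnd hx
      (hsub ht)).mono hsub) (hGtt.mono hsub)
  have hwave : EqOn (fun t => partialFst s (partialFst s G) x t * Complex.cos (ω * t))
      (fun t => q x * (G x t * Complex.cos (ω * t)) +
        partialSnd s (partialSnd s G) x t * Complex.cos (ω * t)) [[0, x]] := fun t ht => by
    simp only
    rw [← hG.wave x hx t (hsub ht)]
    ring
  rw [intervalIntegral.integral_congr hwave, intervalIntegral.integral_add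
    (f := fun t => q x * (G x t * Complex.cos (ω * t)))
    (g := fun t => partialSnd s (partialSnd s G) x t * Complex.cos (ω * t))
    ((((hG.contDiffOn.continuousOn.uncurry_left x hx).mono hsub).mul
      hcos.continuousOn).intervalIntegrable.const_mul _)
    ((hGtt.mono hsub).mul hcos.continuousOn).intervalIntegrable,
    intervalIntegral.integral_const_mul, hibp, hG.partialSnd_zero x hx]
  simp only [Complex.ofReal_zero, mul_zero, Complex.cos_zero, Complex.sin_zero]
  ring

theorem hasDerivWithinAt_cosineSolutionDeriv (hx : x ∈ s) :
    HasDerivWithinAt (cosineSolutionDeriv s G ω) ((q x - ω ^ 2) * cosineSolution G ω x) s x := by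
  have hcos : Continuous fun p : ℝ × ℝ => Complex.cos (ω * p.2) := by fun_prop
  have hGx : ContDiffOn ℝ 1 (uncurry (partialFst s G)) (s ×ˢ s) :=
    ContDiffOn.partialFst (n := 1) hG.contDiffOn hs' hs'
  have hGxx : ContDiffOn ℝ 0 (uncurry (partialFst s (partialFst s G))) (s ×ˢ s) :=
    ContDiffOn.partialFst (n := 0) (by rwa [zero_add]) hs' hs'
  have hleibniz := hasDerivWithinAt_intervalIntegral_leibniz hs
    (f := fun y t => partialFst s G y t * Complex.cos (ω * t))
    (D := fun y t => partialFst s (partialFst s G) y t * Complex.cos (ω * t))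
    (hGx.continuousOn.mul hcos.continuousOn)
    (fun y hy t ht =>
      ((hGx.differentiableOn one_ne_zero).hasDerivWithinAt_partialFst hy ht).mul_const _)
    (hGxx.continuousOn.mul hcos.continuousOn) h0 hx
  have hsin := ((hasDerivAt_sin_mul_ofReal ω x).const_mul ω).neg.hasDerivWithinAt (s := s)
  have hdiag := (hG.hasDerivWithinAt_diag x hx).mul (hasDerivAt_cos_mul_ofReal ω x).hasDerivWithinAt
  refine ((hsin.add hdiag).add hleibniz).congr_deriv ?_
  rw [hG.integral_partialFst_partialFst_mul_cos hs' hs h0 ω hx, cosineSolution]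
  -- the terms at the diagonal add up to `2 (G_x + G_t)(x,x) cos (ω x) = q x cos (ω x)`
  linear_combination Complex.cos (ω * x) * hG.partialFst_add_partialSnd_diag hs' hx

theorem contDiffOn_cosineSolution (hq : ContinuousOn q s) :
    ContDiffOn ℝ 2 (cosineSolution G ω) s := by
  have hc := fun x hx => hasDerivWithinAt_cosineSolution hs hs' h0 ω
    (hG.contDiffOn.of_le one_le_two) (x := x) hx
  have hc' := fun x hx => hG.hasDerivWithinAt_cosineSolutionDeriv hs' hs h0 ω (x := x) hx
  refine contDiffOn_two_of_hasDerivWithinAt hs' hc hc' ((hq.sub continuousOn_const).mul ?_)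
  exact fun x hx => (hc x hx).continuousWithinAt

theorem cosineSolution_ode (hx : x ∈ s) :
    derivWithin (derivWithin (cosineSolution G ω) s) s x - q x * cosineSolution G ω x +
      ω ^ 2 * cosineSolution G ω x = 0 := by
  have hc : EqOn (derivWithin (cosineSolution G ω) s) (cosineSolutionDeriv s G ω) s :=
    fun y hy => (hasDerivWithinAt_cosineSolution hs hs' h0 ω
      (hG.contDiffOn.of_le one_le_two) hy).derivWithin (hs' y hy)
  rw [derivWithin_congr hc (hc hx),
    (hG.hasDerivWithinAt_cosineSolutionDeriv hs' hs h0 ω hx).derivWithin (hs' x hx)]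
  ring

theorem derivWithin_cosineSolution_zero : derivWithin (cosineSolution G ω) s 0 = G 0 0 := by
  rw [(hasDerivWithinAt_cosineSolution hs hs' h0 ω (hG.contDiffOn.of_le one_le_two)
    h0).derivWithin (hs' 0 h0), cosineSolutionDeriv]
  simp

end IsCosineKernel

section Symmetrization

variable {E : Type*} [NormedAddCommGroup E] [NormedSpace ℝ E]
  {F : ℝ → ℝ → E} {s : Set ℝ} {x t : ℝ}

theorem HasDerivWithinAt.comp_neg_of_mapsTo {f : ℝ → E} {f' : E} (hf : HasDerivWithinAt f f' s (-t))
    (hneg : MapsTo Neg.neg s s) : HasDerivWithinAt (fun t => f (-t)) (-f') s t := by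
  have hcomp := hf.scomp t (hasDerivWithinAt_neg t s) hneg
  rwa [neg_one_smul] at hcomp

variable (hF : DifferentiableOn ℝ (uncurry F) (s ×ˢ s)) (hs : UniqueDiffOn ℝ s)
  (hneg : MapsTo Neg.neg s s) (hx : x ∈ s) (ht : t ∈ s)
include hF hs hneg hx ht

theorem partialFst_add_comp_neg :
    partialFst s (fun x t => F x t + F x (-t)) x t = partialFst s F x t + partialFst s F x (-t) :=
  ((hF.hasDerivWithinAt_partialFst hx ht).add
    (hF.hasDerivWithinAt_partialFst hx (hneg ht))).derivWithin (hs x hx)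

theorem partialSnd_add_comp_neg :
    partialSnd s (fun x t => F x t + F x (-t)) x t = partialSnd s F x t - partialSnd s F x (-t) :=
  ((hF.hasDerivWithinAt_partialSnd hx ht).add ((hF.hasDerivWithinAt_partialSnd hx
    (hneg ht)).comp_neg_of_mapsTo hneg)).derivWithin (hs t ht) |>.trans (sub_eq_add_neg _ _).symm

theorem partialSnd_sub_comp_neg :
    partialSnd s (fun x t => F x t - F x (-t)) x t = partialSnd s F x t + partialSnd s F x (-t) :=
  ((hF.hasDerivWithinAt_partialSnd hx ht).sub ((hF.hasDerivWithinAt_partialSnd hx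
    (hneg ht)).comp_neg_of_mapsTo hneg)).derivWithin (hs t ht) |>.trans (sub_neg_eq_add _ _)

end Symmetrization

namespace IsTransmutationKernel

variable {b : ℝ} {q : ℝ → ℂ} {h : ℂ} {K : ℝ → ℝ → ℂ}

theorem isCosineKernel (hK : IsTransmutationKernel b q h K) (hb : 0 < b)
    (hq : ContinuousOn q (Icc (-b) b)) :
    IsCosineKernel (Icc (-b) b) q (fun x t => K x t + K x (-t)) := by
  obtain ⟨hK2, hwave, hdiag, hantidiag⟩ := hK
  set I := Icc (-b) b
  have hI : UniqueDiffOn ℝ I := uniqueDiffOn_Icc (by linarith)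
  have hneg : MapsTo Neg.neg I I := fun t ht => ⟨neg_le_neg ht.2, by linarith [ht.1]⟩
  replace hK2 : ContDiffOn ℝ 2 (uncurry K) (I ×ˢ I) := hK2
  replace hwave : ∀ x ∈ I, ∀ t ∈ I,
      partialFst I (partialFst I K) x t - q x * K x t = partialSnd I (partialSnd I K) x t := hwave
  have hK1 := hK2.differentiableOn two_ne_zero
  have hKx : DifferentiableOn ℝ (uncurry (partialFst I K)) (I ×ˢ I) :=
    (ContDiffOn.partialFst (n := 1) hK2 hI hI).differentiableOn one_ne_zero
  have hKt : DifferentiableOn ℝ (uncurry (partialSnd I K)) (I ×ˢ I) :=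
    (ContDiffOn.partialSnd (n := 1) hK2 hI hI).differentiableOn one_ne_zero
  refine ⟨?_, fun x hx t ht => ?_, fun x hx => ?_, fun x hx => ?_⟩
  · exact hK2.add (hK2.comp (contDiff_fst.prodMk contDiff_snd.neg).contDiffOn
      fun p hp => ⟨hp.1, hneg hp.2⟩)
  · have hxx : partialFst I (partialFst I fun x t => K x t + K x (-t)) x t =
        partialFst I (fun x t => partialFst I K x t + partialFst I K x (-t)) x t :=
      derivWithin_congr (fun y hy => partialFst_add_comp_neg hK1 hI hneg hy ht)
        (partialFst_add_comp_neg hK1 hI hneg hx ht)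
    have htt : partialSnd I (partialSnd I fun x t => K x t + K x (-t)) x t =
        partialSnd I (fun x t => partialSnd I K x t - partialSnd I K x (-t)) x t :=
      derivWithin_congr (fun y hy => partialSnd_add_comp_neg hK1 hI hneg hx hy)
        (partialSnd_add_comp_neg hK1 hI hneg hx ht)
    rw [hxx, htt, partialFst_add_comp_neg hKx hI hneg hx ht,
      partialSnd_sub_comp_neg hKt hI hneg hx ht]
    linear_combination hwave x hx t ht + hwave x hx (-t) (hneg ht)
  · have h0 : (0 : ℝ) ∈ I := ⟨by linarith, by linarith⟩
    -- provides the `FTCFilter` instance for `𝓝[I] x`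
    have : Fact (x ∈ I) := ⟨hx⟩
    have hFTC : HasDerivWithinAt (fun y => ∫ s in (0 : ℝ)..y, q s) (q x) I x :=
      intervalIntegral.integral_hasDerivWithinAt_right
        ((hq.mono (uIcc_subset_Icc h0 hx)).intervalIntegrable)
        (hq.stronglyMeasurableAtFilter_nhdsWithin measurableSet_Icc x) (hq x hx)
    have hGdiag : ∀ y ∈ I, K y y + K y (-y) = h + 1 / 2 * ∫ s in (0 : ℝ)..y, q s := fun y hy => by
      rw [hdiag y hy, hantidiag y hy]
      ring
    exact ((hFTC.const_mul (1 / 2 : ℂ)).const_add h).congr hGdiag (hGdiag x hx) |>.congr_deriv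
      (by ring)
  · rw [partialSnd_add_comp_neg hK1 hI hneg hx ⟨by linarith, by linarith⟩, neg_zero, sub_self]

end IsTransmutationKernel

/-- `c(ω,x) = cos ωx + ∫₀ˣ (K(x,t)+K(x,−t)) cos ωt dt` is a `C²` solution of
`c'' − q c + ω² c = 0` with `c(ω,0) = 1`, `∂c/∂x(ω,0) = h`. -/
theorem cosine_type_solution
    (b : ℝ) (hb : 0 < b) (q : ℝ → ℂ) (hq : ContDiffOn ℝ 1 q (Set.Icc (-b) b))
    (h : ℂ) (K : ℝ → ℝ → ℂ) (hK : IsTransmutationKernel b q h K) (ω : ℂ) :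
    ContDiffOn ℝ 2
      (fun x : ℝ => Complex.cos (ω * x) + ∫ t in (0:ℝ)..x, (K x t + K x (-t)) * Complex.cos (ω * t))
      (Set.Icc (-b) b) ∧
    (∀ x ∈ Set.Icc (-b) b,
      derivWithin
          (derivWithin
            (fun y : ℝ => Complex.cos (ω * y) + ∫ t in (0:ℝ)..y, (K y t + K y (-t)) * Complex.cos (ω * t))
            (Set.Icc (-b) b))
          (Set.Icc (-b) b) x
        - q x * (Complex.cos (ω * x) + ∫ t in (0:ℝ)..x, (K x t + K x (-t)) * Complex.cos (ω * t))
        + ω ^ 2 * (Complex.cos (ω * x) + ∫ t in (0:ℝ)..x, (K x t + K x (-t)) * Complex.cos (ω * t))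
        = 0) ∧
    (Complex.cos (ω * (0:ℝ)) + ∫ t in (0:ℝ)..(0:ℝ), (K 0 t + K 0 (-t)) * Complex.cos (ω * t)) = 1 ∧
    derivWithin
        (fun y : ℝ => Complex.cos (ω * y) + ∫ t in (0:ℝ)..y, (K y t + K y (-t)) * Complex.cos (ω * t))
        (Set.Icc (-b) b) 0 = h := by
  have hs' : UniqueDiffOn ℝ (Icc (-b) b) := uniqueDiffOn_Icc (by linarith)
  have h0 : (0 : ℝ) ∈ Icc (-b) b := ⟨by linarith, hb.le⟩
  have hG := hK.isCosineKernel hb hq.continuousOn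
  have hK00 : K 0 0 = h / 2 := by simpa using hK.2.2.2 0 h0
  refine ⟨hG.contDiffOn_cosineSolution hs' (convex_Icc _ _) h0 ω hq.continuousOn,
    fun x hx => hG.cosineSolution_ode hs' (convex_Icc _ _) h0 ω hx, by simp, ?_⟩
  refine (hG.derivWithin_cosineSolution_zero hs' (convex_Icc _ _) h0 ω).trans ?_
  simp only [neg_zero, hK00]
  ring
end

section
/- For every λ ∈ ℂ the series f' + Σ_{k=1}^∞ (λᵏ/(2k)!)·((f'/f)·φ_{2k} + 2k·ψ_{2k−1}) and Σ_{k=0}^∞ (λᵏ/(2k+1)!)·((f'/f)·φ_{2k+1} + (2k+1)·ψ_{2k}) converge uniformly on [a,b], and their sums equal y₁' and y₂' respectively, where y₁ := Σ_{k=0}^∞ (λᵏ/(2k)!)·φ_{2k} and y₂ := Σ_{k=0}^∞ (λᵏ/(2k+1)!)·φ_{2k+1}. -/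
/-!
For either parity of `n`, `φₙ₊₁ = (n + 1) f ∫_{x₀}^x ψₙ / f`, so every `φₙ` is differentiable on
`[a, b]` with `φₙ' = (f'/f) φₙ + n ψₙ₋₁`. The recursive integrals are iterated integrals against
weights `f^{±2}` bounded by some `M`, so `|X⁽ⁿ⁾|, |X̃⁽ⁿ⁾| ≤ (M |x - x₀|)ⁿ`. Hence the `n`-th terms
of the SPPS series and of their termwise derivatives are both `O(ρⁿ / n!)` uniformly on `[a, b]`,
and a series of `C¹` functions on a closed interval dominated in this way may be differentiated
term by term.
-/

open Set MeasureTheory Filter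

/-- The recursive integrals `X⁽⁰⁾ ≡ 1`, `X⁽ⁿ⁾(x) = n ∫_{x₀}^x X⁽ⁿ⁻¹⁾(s) (f(s)²)^((−1)ⁿ) ds`. -/
noncomputable def Xrec (x₀ : ℝ) (f : ℝ → ℂ) : ℕ → ℝ → ℂ
  | 0 => fun _ => 1
  | n + 1 => fun x => ((n : ℂ) + 1) * ∫ s in x₀..x, Xrec x₀ f n s * (f s ^ 2) ^ ((-1 : ℤ) ^ (n + 1))

/-- The recursive integrals `X̃⁽⁰⁾ ≡ 1`, `X̃⁽ⁿ⁾(x) = n ∫_{x₀}^x X̃⁽ⁿ⁻¹⁾(s) (f(s)²)^((−1)^(n−1)) ds`. -/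
noncomputable def Xtrec (x₀ : ℝ) (f : ℝ → ℂ) : ℕ → ℝ → ℂ
  | 0 => fun _ => 1
  | n + 1 => fun x => ((n : ℂ) + 1) * ∫ s in x₀..x, Xtrec x₀ f n s * (f s ^ 2) ^ ((-1 : ℤ) ^ n)

/-- `φ_k = f·X⁽ᵏ⁾` for odd `k`, `φ_k = f·X̃⁽ᵏ⁾` for even `k`. -/
noncomputable def phiF (x₀ : ℝ) (f : ℝ → ℂ) (k : ℕ) (x : ℝ) : ℂ :=
  if Odd k then f x * Xrec x₀ f k x else f x * Xtrec x₀ f k x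

/-- `ψ_k = X̃⁽ᵏ⁾/f` for odd `k`, `ψ_k = X⁽ᵏ⁾/f` for even `k`. -/
noncomputable def psiF (x₀ : ℝ) (f : ℝ → ℂ) (k : ℕ) (x : ℝ) : ℂ :=
  if Odd k then Xtrec x₀ f k x / f x else Xrec x₀ f k x / f x

/-- The SPPS solution `y₁ = Σ_{k=0}^∞ (λᵏ/(2k)!) φ_{2k}`. -/
noncomputable def sppsY1 (x₀ : ℝ) (f : ℝ → ℂ) (lam : ℂ) (x : ℝ) : ℂ :=
  ∑' k : ℕ, lam ^ k / (Nat.factorial (2 * k) : ℂ) * phiF x₀ f (2 * k) x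

/-- The SPPS solution `y₂ = Σ_{k=0}^∞ (λᵏ/(2k+1)!) φ_{2k+1}`. -/
noncomputable def sppsY2 (x₀ : ℝ) (f : ℝ → ℂ) (lam : ℂ) (x : ℝ) : ℂ :=
  ∑' k : ℕ, lam ^ k / (Nat.factorial (2 * k + 1) : ℂ) * phiF x₀ f (2 * k + 1) x

section IntervalCalculus

variable {E : Type*} [NormedAddCommGroup E] [NormedSpace ℝ E] [CompleteSpace E] {a b x₀ x : ℝ}

theorem hasDerivWithinAt_integral_Icc {g : ℝ → E} (hg : ContinuousOn g (Icc a b))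
    (hx₀ : x₀ ∈ Icc a b) (hx : x ∈ Icc a b) :
    HasDerivWithinAt (fun y => ∫ s in x₀..y, g s) (g x) (Icc a b) x := by
  have : Fact (x ∈ Icc a b) := ⟨hx⟩
  exact intervalIntegral.integral_hasDerivWithinAt_right
    ((hg.mono (uIcc_subset_Icc hx₀ hx)).intervalIntegrable)
    (hg.stronglyMeasurableAtFilter_nhdsWithin measurableSet_Icc x) (hg x hx)

theorem integral_eq_sub_of_hasDerivWithinAt_Icc {u u' : ℝ → E}
    (hu : ∀ t ∈ Icc a b, HasDerivWithinAt u (u' t) (Icc a b) t) (hu' : ContinuousOn u' (Icc a b))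
    (hx₀ : x₀ ∈ Icc a b) (hx : x ∈ Icc a b) :
    ∫ t in x₀..x, u' t = u x - u x₀ := by
  have hsub := uIcc_subset_Icc hx₀ hx
  refine intervalIntegral.integral_eq_sub_of_hasDeriv_right
    (fun t ht => (hu t (hsub ht)).continuousWithinAt.mono hsub) (fun t ht => ?_)
    ((hu'.mono hsub).intervalIntegrable)
  have ht' : t ∈ Ioo a b :=
    ⟨(le_min hx₀.1 hx.1).trans_lt ht.1, ht.2.trans_le (max_le hx₀.2 hx.2)⟩
  exact ((hu t (Ioo_subset_Icc_self ht')).hasDerivAt (Icc_mem_nhds ht'.1 ht'.2)).hasDerivWithinAt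

-- Taking `x` as base point, the fundamental theorem of calculus and dominated convergence give
-- `∑' k, u k y = ∑' k, u k x + ∫ t in x..y, ∑' k, v k t` on the whole interval.
theorem hasDerivWithinAt_tsum_Icc {u v : ℕ → ℝ → E} {p : ℕ → ℝ} (hp : Summable p)
    (hu : ∀ k, ∀ x ∈ Icc a b, ‖u k x‖ ≤ p k) (hv : ∀ k, ∀ x ∈ Icc a b, ‖v k x‖ ≤ p k)
    (hv_cont : ∀ k, ContinuousOn (v k) (Icc a b))
    (huv : ∀ k, ∀ x ∈ Icc a b, HasDerivWithinAt (u k) (v k x) (Icc a b) x) (hx : x ∈ Icc a b) :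
    HasDerivWithinAt (fun y => ∑' k, u k y) (∑' k, v k x) (Icc a b) x := by
  have hg : ContinuousOn (fun t => ∑' k, v k t) (Icc a b) := continuousOn_tsum hv_cont hp hv
  have hsum : ∀ y ∈ Icc a b, ∑' k, u k y = ∑' k, u k x + ∫ t in x..y, ∑' k, v k t := by
    intro y hy
    have hsub := uIoc_subset_uIcc.trans (uIcc_subset_Icc hx hy)
    have hint : HasSum (fun k => ∫ t in x..y, v k t) (∫ t in x..y, ∑' k, v k t) :=
      intervalIntegral.hasSum_integral_of_dominated_convergence (fun k _ => p k)
        (fun k => ((hv_cont k).mono hsub).aestronglyMeasurable measurableSet_uIoc)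
        (fun k => ae_of_all _ fun t ht => hv k t (hsub ht))
        (ae_of_all _ fun _ _ => hp) intervalIntegrable_const
        (ae_of_all _ fun t ht => (hp.of_norm_bounded fun k => hv k t (hsub ht)).hasSum)
    have hdiff : HasSum (fun k => ∫ t in x..y, v k t) (∑' k, u k y - ∑' k, u k x) := by
      simp only [fun k => integral_eq_sub_of_hasDerivWithinAt_Icc (huv k) (hv_cont k) hx hy]
      exact ((hp.of_norm_bounded fun k => hu k y hy).hasSum).sub
        (hp.of_norm_bounded fun k => hu k x hx).hasSum
    rw [hint.unique hdiff, add_sub_cancel]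
  exact ((hasDerivWithinAt_integral_Icc hg hx hx).const_add _).congr hsum (hsum x hx)

theorem tendstoUniformlyOn_sum_derivWithin_tsum_Icc (hab : a < b) {u v : ℕ → ℝ → E}
    {p : ℕ → ℝ} (hp : Summable p)
    (hu : ∀ k, ∀ x ∈ Icc a b, ‖u k x‖ ≤ p k) (hv : ∀ k, ∀ x ∈ Icc a b, ‖v k x‖ ≤ p k)
    (hv_cont : ∀ k, ContinuousOn (v k) (Icc a b))
    (huv : ∀ k, ∀ x ∈ Icc a b, HasDerivWithinAt (u k) (v k x) (Icc a b) x) :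
    TendstoUniformlyOn (fun N x => ∑ k ∈ Finset.range N, v k x)
      (derivWithin (fun x => ∑' k, u k x) (Icc a b)) atTop (Icc a b) :=
  (tendstoUniformlyOn_tsum_nat hp hv).congr_right fun _x hx =>
    ((hasDerivWithinAt_tsum_Icc hp hu hv hv_cont huv hx).derivWithin
      (uniqueDiffOn_Icc hab _ hx)).symm

end IntervalCalculus

noncomputable def iterIntegral (x₀ : ℝ) (w : ℕ → ℝ → ℂ) : ℕ → ℝ → ℂ
  | 0 => fun _ => 1
  | n + 1 => fun x => ((n : ℂ) + 1) * ∫ s in x₀..x, iterIntegral x₀ w n s * w n s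

section IterIntegral

variable {a b x₀ x : ℝ} {w : ℕ → ℝ → ℂ}

theorem hasDerivWithinAt_iterIntegral_succ {n : ℕ}
    (hn : ContinuousOn (iterIntegral x₀ w n) (Icc a b)) (hw : ContinuousOn (w n) (Icc a b))
    (hx₀ : x₀ ∈ Icc a b) (hx : x ∈ Icc a b) :
    HasDerivWithinAt (iterIntegral x₀ w (n + 1))
      (((n : ℂ) + 1) * (iterIntegral x₀ w n x * w n x)) (Icc a b) x :=
  (hasDerivWithinAt_integral_Icc (hn.mul hw) hx₀ hx).const_mul _

theorem continuousOn_iterIntegral (hw : ∀ n, ContinuousOn (w n) (Icc a b))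
    (hx₀ : x₀ ∈ Icc a b) (n : ℕ) : ContinuousOn (iterIntegral x₀ w n) (Icc a b) := by
  induction n with
  | zero => exact continuousOn_const
  | succ n ih =>
    exact fun x hx => (hasDerivWithinAt_iterIntegral_succ ih (hw n) hx₀ hx).continuousWithinAt

theorem norm_iterIntegral_le {M : ℝ} (hM : ∀ n, ∀ x ∈ Icc a b, ‖w n x‖ ≤ M)
    (hx₀ : x₀ ∈ Icc a b) (n : ℕ) (hx : x ∈ Icc a b) :
    ‖iterIntegral x₀ w n x‖ ≤ (M * |x - x₀|) ^ n := by
  induction n generalizing x with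
  | zero => simp [iterIntegral]
  | succ n ih =>
    have hM0 : 0 ≤ M := (norm_nonneg _).trans (hM 0 x₀ hx₀)
    have hint : ‖∫ s in x₀..x, iterIntegral x₀ w n s * w n s‖
        ≤ |∫ s in x₀..x, M ^ (n + 1) * |s - x₀| ^ n| := by
      refine intervalIntegral.norm_integral_le_abs_of_norm_le
        ((ae_restrict_mem measurableSet_uIoc).mono fun s hs => ?_)
        (Continuous.intervalIntegrable (by fun_prop) _ _)
      have hs' := uIcc_subset_Icc hx₀ hx (uIoc_subset_uIcc hs)
      calc ‖iterIntegral x₀ w n s * w n s‖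
          ≤ (M * |s - x₀|) ^ n * M := by
            rw [norm_mul]; exact mul_le_mul (ih hs') (hM n s hs') (norm_nonneg _) (by positivity)
        _ = M ^ (n + 1) * |s - x₀| ^ n := by ring
    have hpow : |∫ s in x₀..x, M ^ (n + 1) * |s - x₀| ^ n|
        = M ^ (n + 1) * (|x - x₀| ^ (n + 1) / (n + 1)) := by
      rw [intervalIntegral.integral_const_mul, abs_mul, abs_of_nonneg (by positivity),
        intervalIntegral.abs_intervalIntegral_eq, integral_pow_abs_sub_uIoc,
        abs_of_nonneg (by positivity)]
    calc ‖iterIntegral x₀ w (n + 1) x‖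
        = (n + 1) * ‖∫ s in x₀..x, iterIntegral x₀ w n s * w n s‖ := by
          simp only [iterIntegral, norm_mul]; norm_cast
      _ ≤ (n + 1) * (M ^ (n + 1) * (|x - x₀| ^ (n + 1) / (n + 1))) := by
          rw [← hpow]; gcongr
      _ = (M * |x - x₀|) ^ (n + 1) := by field_simp; ring

end IterIntegral

theorem norm_pow_div_factorial_le {𝕜 : Type*} [RCLike 𝕜] (z : 𝕜) {k n : ℕ} (hkn : k ≤ n) :
    ‖z ^ k / (n.factorial : 𝕜)‖ ≤ max 1 ‖z‖ ^ n / n.factorial := by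
  rw [norm_div, norm_pow, RCLike.norm_natCast]
  gcongr
  calc ‖z‖ ^ k ≤ max 1 ‖z‖ ^ k := by gcongr; exact le_max_right _ _
    _ ≤ max 1 ‖z‖ ^ n := pow_le_pow_right₀ (le_max_left _ _) hkn

section SPPS

variable {a b x₀ : ℝ} {f : ℝ → ℂ}

theorem Xrec_eq_iterIntegral :
    Xrec x₀ f = iterIntegral x₀ (fun n s => (f s ^ 2) ^ ((-1 : ℤ) ^ (n + 1))) := by
  funext n
  induction n with
  | zero => rfl
  | succ n ih => simp only [Xrec, iterIntegral, ih]

theorem Xtrec_eq_iterIntegral :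
    Xtrec x₀ f = iterIntegral x₀ (fun n s => (f s ^ 2) ^ ((-1 : ℤ) ^ n)) := by
  funext n
  induction n with
  | zero => rfl
  | succ n ih => simp only [Xtrec, iterIntegral, ih]

theorem phiF_zero (x₀ : ℝ) (f : ℝ → ℂ) : phiF x₀ f 0 = f :=
  funext fun x => by simp [phiF, Xtrec]

theorem phiF_succ (n : ℕ) (x : ℝ) :
    phiF x₀ f (n + 1) x = f x * (((n : ℂ) + 1) * ∫ s in x₀..x, psiF x₀ f n s / f s) := by
  rcases Nat.even_or_odd n with hn | hn
  · have hn' : ¬Odd n := Nat.not_odd_iff_even.2 hn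
    simp only [phiF, psiF, hn.add_one, hn', if_true, if_false, Xrec, hn.add_one.neg_one_pow,
      zpow_neg_one, sq, mul_inv, div_eq_mul_inv, mul_assoc]
  · have hn' : ¬Odd (n + 1) := Nat.not_odd_iff_even.2 hn.add_one
    simp only [phiF, psiF, hn, hn', if_true, if_false, Xtrec, hn.neg_one_pow,
      zpow_neg_one, sq, mul_inv, div_eq_mul_inv, mul_assoc]

variable (hf : ContinuousOn f (Icc a b)) (hfne : ∀ x ∈ Icc a b, f x ≠ 0)
include hf hfne

theorem exists_norm_sq_zpow_neg_one_pow_le :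
    ∃ M, ∀ n : ℕ, ∀ x ∈ Icc a b, ‖(f x ^ 2) ^ ((-1 : ℤ) ^ n)‖ ≤ M := by
  obtain ⟨M, hM⟩ := isCompact_Icc.exists_bound_of_continuousOn
    ((hf.pow 2).norm.add ((hf.pow 2).inv₀ fun x hx => pow_ne_zero 2 (hfne x hx)).norm)
  refine ⟨M, fun n x hx => ?_⟩
  have hsum := (Real.le_norm_self _).trans (hM x hx)
  rcases neg_one_pow_eq_or ℤ n with h | h <;> rw [h]
  · rw [zpow_one]; exact (le_add_of_nonneg_right (norm_nonneg _)).trans hsum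
  · rw [zpow_neg_one]; exact (le_add_of_nonneg_left (norm_nonneg _)).trans hsum

theorem continuousOn_sq_zpow (m : ℤ) : ContinuousOn (fun x => (f x ^ 2) ^ m) (Icc a b) :=
  (hf.pow 2).zpow₀ m fun x hx => Or.inl (pow_ne_zero 2 (hfne x hx))

variable (hx₀ : x₀ ∈ Icc a b)
include hx₀

theorem continuousOn_Xrec (n : ℕ) : ContinuousOn (Xrec x₀ f n) (Icc a b) := by
  rw [Xrec_eq_iterIntegral]
  exact continuousOn_iterIntegral (fun _ => continuousOn_sq_zpow hf hfne _) hx₀ n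

theorem continuousOn_Xtrec (n : ℕ) : ContinuousOn (Xtrec x₀ f n) (Icc a b) := by
  rw [Xtrec_eq_iterIntegral]
  exact continuousOn_iterIntegral (fun _ => continuousOn_sq_zpow hf hfne _) hx₀ n

theorem continuousOn_phiF (n : ℕ) : ContinuousOn (phiF x₀ f n) (Icc a b) := by
  by_cases h : Odd n
  · exact (hf.mul (continuousOn_Xrec hf hfne hx₀ n)).congr fun x _ => if_pos h
  · exact (hf.mul (continuousOn_Xtrec hf hfne hx₀ n)).congr fun x _ => if_neg h

theorem continuousOn_psiF (n : ℕ) : ContinuousOn (psiF x₀ f n) (Icc a b) := by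
  by_cases h : Odd n
  · exact ((continuousOn_Xtrec hf hfne hx₀ n).div hf hfne).congr fun x _ => if_pos h
  · exact ((continuousOn_Xrec hf hfne hx₀ n).div hf hfne).congr fun x _ => if_neg h

theorem exists_norm_Xrec_Xtrec_le :
    ∃ D, 1 ≤ D ∧ ∀ n, ∀ x ∈ Icc a b, ‖Xrec x₀ f n x‖ ≤ D ^ n ∧ ‖Xtrec x₀ f n x‖ ≤ D ^ n := by
  obtain ⟨M, hM⟩ := exists_norm_sq_zpow_neg_one_pow_le hf hfne
  have hM0 : 0 ≤ M := (norm_nonneg _).trans (hM 0 x₀ hx₀)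
  have hba : 0 ≤ b - a := by linarith [hx₀.1, hx₀.2]
  refine ⟨M * (b - a) + 1, by nlinarith, fun n x hx => ?_⟩
  have hdist : |x - x₀| ≤ b - a :=
    abs_sub_le_iff.2 ⟨by linarith [hx.2, hx₀.1], by linarith [hx.1, hx₀.2]⟩
  have hMD : M * |x - x₀| ≤ M * (b - a) + 1 := by nlinarith
  rw [Xrec_eq_iterIntegral, Xtrec_eq_iterIntegral]
  exact ⟨(norm_iterIntegral_le (fun n => hM (n + 1)) hx₀ n hx).trans (by gcongr),
    (norm_iterIntegral_le hM hx₀ n hx).trans (by gcongr)⟩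

theorem exists_norm_phiF_psiF_le :
    ∃ K D, 0 ≤ K ∧ 1 ≤ D ∧ ∀ n, ∀ x ∈ Icc a b,
      ‖phiF x₀ f n x‖ ≤ K * D ^ n ∧ ‖psiF x₀ f n x‖ ≤ K * D ^ n := by
  obtain ⟨D, hD, hX⟩ := exists_norm_Xrec_Xtrec_le hf hfne hx₀
  obtain ⟨K, hK⟩ :=
    isCompact_Icc.exists_bound_of_continuousOn (hf.norm.add (hf.inv₀ hfne).norm)
  have hK0 : 0 ≤ K := (norm_nonneg _).trans (hK x₀ hx₀)
  refine ⟨K, D, hK0, hD, fun n x hx => ?_⟩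
  have hsum := (Real.le_norm_self _).trans (hK x hx)
  have hmul : ∀ z : ℂ, ‖z‖ ≤ D ^ n → ‖f x * z‖ ≤ K * D ^ n ∧ ‖z / f x‖ ≤ K * D ^ n := by
    intro z hz
    rw [norm_mul, div_eq_inv_mul, norm_mul]
    exact ⟨mul_le_mul ((le_add_of_nonneg_right (norm_nonneg _)).trans hsum) hz (norm_nonneg _) hK0,
      mul_le_mul ((le_add_of_nonneg_left (norm_nonneg _)).trans hsum) hz (norm_nonneg _) hK0⟩
  obtain ⟨hXn, hXtn⟩ := hX n x hx
  by_cases h : Odd n <;> simp only [phiF, psiF, h, if_true, if_false]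
  exacts [⟨(hmul _ hXn).1, (hmul _ hXtn).2⟩, ⟨(hmul _ hXtn).1, (hmul _ hXn).2⟩]

theorem exists_norm_phiF_deriv_le {f' : ℝ → ℂ} (hf' : ContinuousOn f' (Icc a b)) :
    ∃ K D, 0 ≤ K ∧ 0 ≤ D ∧ ∀ n : ℕ, ∀ x ∈ Icc a b, ‖phiF x₀ f n x‖ ≤ K * D ^ n ∧
      ‖f' x / f x * phiF x₀ f n x + n * psiF x₀ f (n - 1) x‖ ≤ K * D ^ n := by
  obtain ⟨K, D, hK, hD, hbound⟩ := exists_norm_phiF_psiF_le hf hfne hx₀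
  obtain ⟨L, hL⟩ := isCompact_Icc.exists_bound_of_continuousOn (hf'.div hf hfne)
  have hL0 : 0 ≤ L := (norm_nonneg _).trans (hL x₀ hx₀)
  refine ⟨K * (L + 1), 2 * D, by positivity, by positivity, fun n x hx => ?_⟩
  have h2n : (1 : ℝ) ≤ 2 ^ n := one_le_pow₀ one_le_two
  have hn : (n : ℝ) ≤ 2 ^ n := by exact_mod_cast n.lt_two_pow_self.le
  have hpsi : ‖psiF x₀ f (n - 1) x‖ ≤ K * D ^ n :=
    (hbound (n - 1) x hx).2.trans (mul_le_mul_of_nonneg_left (pow_le_pow_right₀ hD (n.sub_le 1)) hK)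
  constructor
  · calc ‖phiF x₀ f n x‖ ≤ K * D ^ n * 1 := by rw [mul_one]; exact (hbound n x hx).1
      _ ≤ K * D ^ n * ((L + 1) * 2 ^ n) := by gcongr; nlinarith
      _ = K * (L + 1) * (2 * D) ^ n := by ring
  · calc ‖f' x / f x * phiF x₀ f n x + n * psiF x₀ f (n - 1) x‖
        ≤ L * (K * D ^ n) + n * (K * D ^ n) := by
          refine (norm_add_le _ _).trans (add_le_add ?_ ?_) <;> rw [norm_mul]
          · exact mul_le_mul (hL x hx) (hbound n x hx).1 (norm_nonneg _) hL0
          · rw [Complex.norm_natCast]; gcongr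
      _ = K * D ^ n * (L + n) := by ring
      _ ≤ K * D ^ n * ((L + 1) * 2 ^ n) := by gcongr; nlinarith
      _ = K * (L + 1) * (2 * D) ^ n := by ring

end SPPS

-- At `n = 0` the truncated `n - 1 = 0` is harmless, the term carries the factor `n`.
theorem hasDerivWithinAt_phiF {a b x₀ x : ℝ} {f f' : ℝ → ℂ}
    (hf : ∀ x ∈ Icc a b, HasDerivWithinAt f (f' x) (Icc a b) x)
    (hfne : ∀ x ∈ Icc a b, f x ≠ 0) (hx₀ : x₀ ∈ Icc a b) (n : ℕ) (hx : x ∈ Icc a b) :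
    HasDerivWithinAt (phiF x₀ f n) (f' x / f x * phiF x₀ f n x + n * psiF x₀ f (n - 1) x)
      (Icc a b) x := by
  have hfc : ContinuousOn f (Icc a b) := fun x hx => (hf x hx).continuousWithinAt
  cases n with
  | zero =>
    rw [phiF_zero]
    convert hf x hx using 1
    field_simp [hfne x hx]
    simp
  | succ n =>
    have hint := hasDerivWithinAt_integral_Icc
      ((continuousOn_psiF hfc hfne hx₀ n).div hfc hfne) hx₀ hx
    refine ((hf x hx).mul (hint.const_mul ((n : ℂ) + 1))).congr (fun y _ => phiF_succ n y)
      (phiF_succ n x) |>.congr_deriv ?_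
    simp only [phiF_succ, Nat.add_sub_cancel, Pi.div_apply]
    push_cast
    field_simp [hfne x hx]

theorem tendstoUniformlyOn_sum_deriv_phiF {a b x₀ : ℝ} (hab : a < b) {f : ℝ → ℂ}
    (hf : ContDiffOn ℝ 1 f (Icc a b)) (hfne : ∀ x ∈ Icc a b, f x ≠ 0) (hx₀ : x₀ ∈ Icc a b)
    {c : ℕ → ℂ} {e : ℕ → ℕ} (he : Function.Injective e) {ρ : ℝ} (hρ : 0 ≤ ρ)
    (hc : ∀ k, ‖c k‖ ≤ ρ ^ e k / (e k).factorial) :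
    TendstoUniformlyOn
      (fun N x => ∑ k ∈ Finset.range N, c k *
        (derivWithin f (Icc a b) x / f x * phiF x₀ f (e k) x + (e k : ℂ) * psiF x₀ f (e k - 1) x))
      (derivWithin (fun x => ∑' k, c k * phiF x₀ f (e k) x) (Icc a b)) atTop (Icc a b) := by
  have hfc := hf.continuousOn
  have hf' : ContinuousOn (derivWithin f (Icc a b)) (Icc a b) :=
    hf.continuousOn_derivWithin (uniqueDiffOn_Icc hab) le_rfl
  obtain ⟨K, D, hK, hD, hbound⟩ := exists_norm_phiF_deriv_le hfc hfne hx₀ hf'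
  have hterm : ∀ k (z : ℂ), ‖z‖ ≤ K * D ^ e k →
      ‖c k * z‖ ≤ K * ((ρ * D) ^ e k / (e k).factorial) := by
    intro k z hz
    calc ‖c k * z‖ ≤ ρ ^ e k / (e k).factorial * (K * D ^ e k) := by
          rw [norm_mul]; exact mul_le_mul (hc k) hz (norm_nonneg _) (by positivity)
      _ = K * ((ρ * D) ^ e k / (e k).factorial) := by ring
  refine tendstoUniformlyOn_sum_derivWithin_tsum_Icc hab
    (((Real.summable_pow_div_factorial (ρ * D)).mul_left K).comp_injective he)
    (fun k x hx => hterm k _ (hbound (e k) x hx).1) (fun k x hx => hterm k _ (hbound (e k) x hx).2)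
    (fun k => continuousOn_const.mul
      (((hf'.div hfc hfne).mul (continuousOn_phiF hfc hfne hx₀ _)).add
        (continuousOn_const.mul (continuousOn_psiF hfc hfne hx₀ _))))
    (fun k x hx => ?_)
  exact (hasDerivWithinAt_phiF (fun y hy => (hf.differentiableOn one_ne_zero y hy).hasDerivWithinAt)
    hfne hx₀ (e k) hx).const_mul (c k)

theorem spps_derivative_representation_general
    (a b : ℝ) (hab : a < b)
    (f : ℝ → ℂ) (hf1 : ContDiffOn ℝ 1 f (Set.Icc a b))
    (hfne : ∀ x ∈ Set.Icc a b, f x ≠ 0)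
    (x₀ : ℝ) (hx₀ : x₀ ∈ Set.Icc a b) (lam : ℂ) :
    TendstoUniformlyOn
      (fun N x => derivWithin f (Set.Icc a b) x
        + ∑ k ∈ Finset.Icc 1 N, lam ^ k / (Nat.factorial (2 * k) : ℂ) *
            ((derivWithin f (Set.Icc a b) x / f x) * phiF x₀ f (2 * k) x
              + (2 * k : ℂ) * psiF x₀ f (2 * k - 1) x))
      (derivWithin (sppsY1 x₀ f lam) (Set.Icc a b)) atTop (Set.Icc a b) ∧
    TendstoUniformlyOn
      (fun N x => ∑ k ∈ Finset.range N, lam ^ k / (Nat.factorial (2 * k + 1) : ℂ) *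
          ((derivWithin f (Set.Icc a b) x / f x) * phiF x₀ f (2 * k + 1) x
            + (2 * k + 1 : ℂ) * psiF x₀ f (2 * k) x))
      (derivWithin (sppsY2 x₀ f lam) (Set.Icc a b)) atTop (Set.Icc a b) := by
  have hseries := fun {e : ℕ → ℕ} (he : Function.Injective e) (hke : ∀ k, k ≤ e k) =>
    tendstoUniformlyOn_sum_deriv_phiF hab hf1 hfne hx₀ he (zero_le_one.trans (le_max_left 1 ‖lam‖))
      (c := fun k => lam ^ k / ((e k).factorial : ℂ)) fun k => norm_pow_div_factorial_le lam (hke k)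
  constructor
  · have h := hseries (e := fun k => 2 * k) (mul_right_injective₀ two_ne_zero) (by omega)
    refine TendstoUniformlyOn.congr (fun u hu => (tendsto_add_atTop_nat 1).eventually (h u hu))
      (Eventually.of_forall fun N x hx => ?_)
    beta_reduce
    rw [Finset.range_eq_Ico, Finset.sum_eq_sum_Ico_succ_bot N.add_one_pos, zero_add,
      Finset.Ico_add_one_right_eq_Icc]
    push_cast
    congr 1
    simp [phiF_zero, hfne x hx]
  · refine (hseries (e := fun k => 2 * k + 1) (fun i j h => by simpa using h) (by omega)).congr
      (Eventually.of_forall fun N x _ => ?_)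
    simp only [Nat.add_sub_cancel]
    push_cast
    rfl

/-- the differentiated SPPS series converge uniformly on `[a,b]` and their
sums are the derivatives `y₁'` and `y₂'` respectively. -/
theorem spps_derivative_representation
    (a b : ℝ) (hab : a < b) (q : ℝ → ℂ) (hq : ContinuousOn q (Set.Icc a b))
    (f : ℝ → ℂ) (hf1 : ContDiffOn ℝ 1 f (Set.Icc a b)) (hf2 : ContDiffOn ℝ 2 f (Set.Ioo a b))
    (hfeq : ∀ x ∈ Set.Ioo a b,
      derivWithin (derivWithin f (Set.Icc a b)) (Set.Icc a b) x = q x * f x)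
    (hfne : ∀ x ∈ Set.Icc a b, f x ≠ 0)
    (x₀ : ℝ) (hx₀ : x₀ ∈ Set.Icc a b) (lam : ℂ) :
    TendstoUniformlyOn
      (fun N x => derivWithin f (Set.Icc a b) x
        + ∑ k ∈ Finset.Icc 1 N, lam ^ k / (Nat.factorial (2 * k) : ℂ) *
            ((derivWithin f (Set.Icc a b) x / f x) * phiF x₀ f (2 * k) x
              + (2 * k : ℂ) * psiF x₀ f (2 * k - 1) x))
      (derivWithin (sppsY1 x₀ f lam) (Set.Icc a b)) atTop (Set.Icc a b) ∧
    TendstoUniformlyOn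
      (fun N x => ∑ k ∈ Finset.range N, lam ^ k / (Nat.factorial (2 * k + 1) : ℂ) *
          ((derivWithin f (Set.Icc a b) x / f x) * phiF x₀ f (2 * k + 1) x
            + (2 * k + 1 : ℂ) * psiF x₀ f (2 * k) x))
      (derivWithin (sppsY2 x₀ f lam) (Set.Icc a b)) atTop (Set.Icc a b) :=
  spps_derivative_representation_general a b hab f hf1 hfne x₀ hx₀ lam
end
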